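/- arXiv:1407.2690 — 3 statements merged into one kernel-verified Lean document; each statement's English description precedes it below -/
import Mathlib

section
/- Let Q be a finite quiver with no precyclic source (a source is a vertex with no incoming arrows). Then every precyclic vertex of Q is postcyclic, i.e., is the endpoint of a path starting on an oriented cycle. -/
universe u

/-- A vertex lies on an oriented cycle if there is a nontrivial path from it to itself. -/
def LiesOnCycle {Q : Type u} [Quiver.{u + 1} Q] (a : Q) : Prop :=
  ∃ p : Quiver.Path a a, p.length ≠ 0

/-- A vertex is precyclic if some path starting at it ends at a vertex lying on an
oriented cycle. -/
def Precyclic {Q : Type u} [Quiver.{u + 1} Q] (a : Q) : Prop :=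
  ∃ (b : Q) (_ : Quiver.Path a b), LiesOnCycle b

/-- A vertex is postcyclic if it is the endpoint of some path starting on an
oriented cycle. -/
def Postcyclic {Q : Type u} [Quiver.{u + 1} Q] (a : Q) : Prop :=
  ∃ (b : Q) (_ : Quiver.Path b a), LiesOnCycle b

/-- A source is a vertex with no incoming arrows. -/
def IsSource {Q : Type u} [Quiver.{u + 1} Q] (a : Q) : Prop :=
  ∀ b : Q, IsEmpty (b ⟶ a)

private lemma aux_walk {Q : Type u} [Quiver.{u + 1} Q] [Fintype Q] [DecidableEq Q]
    (h : ∀ a : Q, IsSource a → ¬ Precyclic a) (a : Q) :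
    ∀ n : ℕ, ∀ s : Finset Q, sᶜ.card ≤ n → ∀ b : Q, b ∉ s → Precyclic b →
      Quiver.Path b a → (∀ c ∈ s, ∃ q : Quiver.Path b c, q.length ≠ 0) →
      Postcyclic a := by
  intro n
  induction n with
  | zero =>
    intro s hs b hb _ _ _
    have : b ∈ sᶜ := Finset.mem_compl.mpr hb
    have := Finset.card_pos.mpr ⟨b, this⟩
    omega
  | succ n ih =>
    intro s hs b hb hpre p hq
    -- b is not a source
    have hns : ¬ IsSource b := fun hsrc => h b hsrc hpre
    simp only [IsSource, not_forall, not_isEmpty_iff] at hns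
    obtain ⟨c, ⟨e⟩⟩ := hns
    by_cases hc : c ∈ insert b s
    · rcases Finset.mem_insert.mp hc with rfl | hcs
      · -- c = b : loop at b
        exact ⟨_, p, e.toPath, by simp [Quiver.Hom.toPath]⟩
      · -- c ∈ s : nontrivial path b → c, arrow c → b gives a cycle at c
        obtain ⟨q, hq0⟩ := hq c hcs
        refine ⟨c, e.toPath.comp p, e.toPath.comp q, ?_⟩
        simp [Quiver.Path.length_comp, Quiver.Hom.toPath, hq0]
    · -- recurse with insert b s
      have hbcompl : b ∈ sᶜ := Finset.mem_compl.mpr hb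
      have hcard : (insert b s)ᶜ.card ≤ n := by
        rw [Finset.compl_insert]
        have := Finset.card_erase_of_mem hbcompl
        omega
      have hpc : Precyclic c := by
        obtain ⟨d, q, hd⟩ := hpre
        exact ⟨d, e.toPath.comp q, hd⟩
      refine ih (insert b s) hcard c hc hpc (e.toPath.comp p) ?_
      intro d hd
      rcases Finset.mem_insert.mp hd with rfl | hds
      · exact ⟨e.toPath, by simp [Quiver.Hom.toPath]⟩
      · obtain ⟨q, hq0⟩ := hq d hds
        refine ⟨e.toPath.comp q, ?_⟩
        simp [Quiver.Path.length_comp]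

/-- In a finite quiver with no precyclic source, every precyclic vertex is postcyclic. -/
theorem postcyclic_of_precyclic_of_no_precyclic_source {Q : Type u} [Quiver.{u + 1} Q]
    [Fintype Q] (h : ∀ a : Q, IsSource a → ¬ Precyclic a) :
    ∀ a : Q, Precyclic a → Postcyclic a := by
  classical
  intro a hpre
  exact aux_walk h a (∅ᶜ : Finset Q).card ∅ le_rfl a (Finset.notMem_empty a) hpre
    Quiver.Path.nil (fun c hc => absurd hc (Finset.notMem_empty c))
end

section
/- Let Λ = KQ/I be a truncated path algebra of Loewy length L+1, and let ε be the sum of the primitive idempotents e_i corresponding to the non-precyclic vertices of Q. Then εΛε = Λε; consequently, for every left Λ-module M the subspace εM is a Λ-submodule of M. -/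
universe u

structure ShortPath (Q : Type u) [Quiver.{u + 1} Q] (L : ℕ) : Type (u + 1) where
  src : Q
  tgt : Q
  path : Quiver.Path src tgt
  len_le : path.length ≤ L

/-- A realization of the truncated path algebra `KQ/⟨paths of length L+1⟩`:
the data of the images of the paths of `Q` in `Λ`, subject to axioms that
characterize `Λ` as the truncated path algebra. -/
structure TruncatedPathAlgebra (K : Type u) [Field K] (Q : Type u) [Quiver.{u + 1} Q]
    [Fintype Q] (L : ℕ) (Λ : Type u) [Ring Λ] [Algebra K Λ] : Type (u + 1) where
  pathMap : ∀ {a b : Q}, Quiver.Path a b → Λ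
  pathMap_comp : ∀ {a b c : Q} (p : Quiver.Path a b) (q : Quiver.Path b c),
    pathMap (p.comp q) = pathMap q * pathMap p
  sum_nil : ∑ a : Q, pathMap (Quiver.Path.nil : Quiver.Path a a) = 1
  orth : ∀ {a b : Q}, a ≠ b →
    pathMap (Quiver.Path.nil : Quiver.Path a a) * pathMap (Quiver.Path.nil : Quiver.Path b b) = 0
  pathMap_eq_zero_iff : ∀ {a b : Q} (p : Quiver.Path a b), pathMap p = 0 ↔ L < p.length
  basis_indep : LinearIndependent K (fun s : ShortPath Q L => pathMap s.path)
  basis_span : ⊤ ≤ Submodule.span K (Set.range (fun s : ShortPath Q L => pathMap s.path))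

namespace TruncatedPathAlgebra

variable {K : Type u} [Field K] {Q : Type u} [Quiver.{u + 1} Q] [Fintype Q] {L : ℕ}
  {Λ : Type u} [Ring Λ] [Algebra K Λ]

/-- The primitive idempotent of `Λ` corresponding to a vertex. -/
def e (T : TruncatedPathAlgebra K Q L Λ) (a : Q) : Λ :=
  T.pathMap (Quiver.Path.nil : Quiver.Path a a)

open Classical in
/-- `ε`, the sum of the primitive idempotents at the non-precyclic vertices. -/
noncomputable def eps (T : TruncatedPathAlgebra K Q L Λ) : Λ :=
  ∑ a : Q, if Precyclic a then 0 else T.e a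

/-- The radical `JM` of a `Λ`-module `M`. -/
def radM (T : TruncatedPathAlgebra K Q L Λ) (M : Type u) [AddCommGroup M] [Module Λ M] :
    Submodule Λ M :=
  Submodule.span Λ
    {x : M | ∃ (a b : Q) (p : Quiver.Path a b) (m : M), p.length ≠ 0 ∧ x = T.pathMap p • m}

end TruncatedPathAlgebra

/-- `M` has projective dimension at most `n` over `R`. -/
def ProjDimLE (R : Type u) [Ring R] (n : ℕ) (M : Type u) [AddCommGroup M] [Module R M] : Prop :=
  match n with
  | 0 => Module.Projective R M
  | n + 1 => ∃ (ι : Type u) (f : (ι →₀ R) →ₗ[R] M),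
      Function.Surjective f ∧ ProjDimLE R n ↥(LinearMap.ker f)

/-- `M` has finite projective dimension over `R`. -/
def FinProjDim (R : Type u) [Ring R] (M : Type u) [AddCommGroup M] [Module R M] : Prop :=
  ∃ n : ℕ, ProjDimLE R n M

namespace TruncatedPathAlgebra

variable {K : Type u} [Field K] {Q : Type u} [Quiver.{u + 1} Q] [Fintype Q] {L : ℕ}
  {Λ : Type u} [Ring Λ] [Algebra K Λ]

lemma mul_e_src (T : TruncatedPathAlgebra K Q L Λ) {a b : Q} (p : Quiver.Path a b) :
    T.pathMap p * T.e a = T.pathMap p := by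
  have := T.pathMap_comp (Quiver.Path.nil : Quiver.Path a a) p
  rw [Quiver.Path.nil_comp] at this
  exact this.symm

lemma e_tgt_mul (T : TruncatedPathAlgebra K Q L Λ) {a b : Q} (p : Quiver.Path a b) :
    T.e b * T.pathMap p = T.pathMap p := by
  have := T.pathMap_comp p (Quiver.Path.nil : Quiver.Path b b)
  rw [Quiver.Path.comp_nil] at this
  exact this.symm

lemma mul_e_ne (T : TruncatedPathAlgebra K Q L Λ) {a b c : Q} (p : Quiver.Path a b)
    (h : c ≠ a) : T.pathMap p * T.e c = 0 := by
  rw [← T.mul_e_src p, mul_assoc]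
  simp only [e]
  rw [T.orth (fun hh => h hh.symm), mul_zero]

lemma e_ne_mul (T : TruncatedPathAlgebra K Q L Λ) {a b c : Q} (p : Quiver.Path a b)
    (h : c ≠ b) : T.e c * T.pathMap p = 0 := by
  rw [← T.e_tgt_mul p, ← mul_assoc]
  simp only [e]
  rw [T.orth h, zero_mul]

open Classical in
lemma mul_eps (T : TruncatedPathAlgebra K Q L Λ) {a b : Q} (p : Quiver.Path a b) :
    T.pathMap p * T.eps = if Precyclic a then 0 else T.pathMap p := by
  classical
  unfold eps
  rw [Finset.mul_sum, Finset.sum_eq_single a]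
  · split_ifs with h
    · simp
    · simp [T.mul_e_src p]
  · intro c _ hc
    split_ifs with h
    · simp
    · simp [T.mul_e_ne p hc]
  · intro h; exact absurd (Finset.mem_univ a) h

open Classical in
lemma eps_mul (T : TruncatedPathAlgebra K Q L Λ) {a b : Q} (p : Quiver.Path a b) :
    T.eps * T.pathMap p = if Precyclic b then 0 else T.pathMap p := by
  classical
  unfold eps
  rw [Finset.sum_mul, Finset.sum_eq_single b]
  · split_ifs with h
    · simp
    · simp [T.e_tgt_mul p]
  · intro c _ hc
    split_ifs with h
    · simp
    · simp [T.e_ne_mul p hc]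
  · intro h; exact absurd (Finset.mem_univ b) h

omit [Fintype Q] in
lemma precyclic_of_path {a b : Q} (p : Quiver.Path a b) (h : Precyclic b) :
    Precyclic a := by
  obtain ⟨c, q, hc⟩ := h
  exact ⟨c, p.comp q, hc⟩

lemma eps_mul_pathMap_mul_eps (T : TruncatedPathAlgebra K Q L Λ) {a b : Q}
    (p : Quiver.Path a b) :
    T.eps * T.pathMap p * T.eps = T.pathMap p * T.eps := by
  rw [mul_assoc, T.mul_eps p]
  split_ifs with h
  · simp
  · rw [T.eps_mul p, if_neg (fun hb => h (precyclic_of_path p hb))]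

lemma corner (T : TruncatedPathAlgebra K Q L Λ) (x : Λ) :
    T.eps * x * T.eps = x * T.eps := by
  have hx : x ∈ Submodule.span K
      (Set.range (fun s : ShortPath Q L => T.pathMap s.path)) :=
    T.basis_span Submodule.mem_top
  induction hx using Submodule.span_induction with
  | mem y hy =>
    obtain ⟨s, rfl⟩ := hy
    exact T.eps_mul_pathMap_mul_eps s.path
  | zero => simp
  | add y z _ _ hy hz => rw [mul_add, add_mul, add_mul, hy, hz]
  | smul k y _ hy =>
    rw [mul_smul_comm, smul_mul_assoc, smul_mul_assoc, hy]

end TruncatedPathAlgebra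

open TruncatedPathAlgebra in
/-- For a truncated path algebra `Λ` with `ε` the sum of the idempotents at the
non-precyclic vertices, `εΛε = Λε`; consequently, for every left `Λ`-module `M`
the subset `εM` is a `Λ`-submodule of `M`. -/
theorem eps_corner_eq_and_eps_smul_submodule
    {K : Type u} [Field K] {Q : Type u} [Quiver.{u + 1} Q] [Fintype Q] {L : ℕ}
    (hL : 1 ≤ L) {Λ : Type u} [Ring Λ] [Algebra K Λ] (T : TruncatedPathAlgebra K Q L Λ) :
    ({y : Λ | ∃ x : Λ, y = T.eps * x * T.eps} = {y : Λ | ∃ x : Λ, y = x * T.eps}) ∧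
    (∀ (M : Type u) [AddCommGroup M] [Module Λ M],
      ∃ N : Submodule Λ M, (N : Set M) = Set.range (fun m : M => T.eps • m)) := by
  constructor
  · ext y
    constructor
    · rintro ⟨x, rfl⟩
      exact ⟨T.eps * x, rfl⟩
    · rintro ⟨x, rfl⟩
      exact ⟨x, (T.corner x).symm⟩
  · intro M _ _
    refine ⟨{ carrier := Set.range (fun m : M => T.eps • m)
              zero_mem' := ⟨0, smul_zero _⟩
              add_mem' := ?_
              smul_mem' := ?_ }, rfl⟩
    · rintro x y ⟨m, rfl⟩ ⟨m', rfl⟩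
      exact ⟨m + m', smul_add _ _ _⟩
    · rintro c x ⟨m, rfl⟩
      refine ⟨(c * T.eps) • m, ?_⟩
      simp only
      rw [← mul_smul, ← mul_smul, ← mul_assoc, T.corner c]
end

section
/- Let A be a finite dimensional algebra and C a contravariantly finite resolving subcategory of A-mod. Then the minimal right C-approximation of any finitely generated injective left A-module E is Ext-injective in C, i.e., every short exact sequence 0 → B → X → Y → 0 in C starting at the approximation B splits. -/
universe u

open CategoryTheory

/-- Let `A` be a finite dimensional algebra, and let `C` be a contravariantly finite
resolving subcategory of `A`-mod (given as an isomorphism-closed class of finitely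
generated modules containing the projectives and closed under extensions and kernels of
epimorphisms).  Then the minimal right `C`-approximation `f : B → E` of a finitely
generated injective module `E` is Ext-injective in `C`: any monomorphism `B → X` in `C`
whose cokernel lies in `C` splits. -/
theorem minimal_approximation_of_injective_is_ext_injective
    (K : Type u) [Field K] (A : Type u) [Ring A] [Algebra K A] [FiniteDimensional K A]
    (C : Set (ModuleCat.{u} A))
    (hfg : ∀ X ∈ C, Module.Finite A X)
    (hiso : ∀ X Y : ModuleCat.{u} A, X ∈ C → Nonempty (↥X ≃ₗ[A] ↥Y) → Y ∈ C)
    (hproj : ∀ X : ModuleCat.{u} A, Module.Finite A X → Module.Projective A X → X ∈ C)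
    (hext : ∀ (X : ModuleCat.{u} A) (N : Submodule A X),
        ModuleCat.of A ↥N ∈ C → ModuleCat.of A (↥X ⧸ N) ∈ C → X ∈ C)
    (hker : ∀ X Y : ModuleCat.{u} A, X ∈ C → Y ∈ C → ∀ f : ↥X →ₗ[A] ↥Y,
        Function.Surjective f → ModuleCat.of A ↥(LinearMap.ker f) ∈ C)
    (hcf : ∀ M : ModuleCat.{u} A, Module.Finite A M →
        ∃ B ∈ C, ∃ f : ↥B →ₗ[A] ↥M, ∀ C' ∈ C, ∀ g : ↥C' →ₗ[A] ↥M,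
          ∃ h : ↥C' →ₗ[A] ↥B, f.comp h = g)
    (E : ModuleCat.{u} A) (hEfin : Module.Finite A E) (hEinj : Module.Injective A E)
    (B : ModuleCat.{u} A) (hB : B ∈ C) (f : ↥B →ₗ[A] ↥E)
    (happrox : ∀ C' ∈ C, ∀ g : ↥C' →ₗ[A] ↥E, ∃ h : ↥C' →ₗ[A] ↥B, f.comp h = g)
    (hmin : ∀ g : ↥B →ₗ[A] ↥B, f.comp g = f → Function.Bijective g) :
    ∀ X : ModuleCat.{u} A, X ∈ C → ∀ ι : ↥B →ₗ[A] ↥X, Function.Injective ι →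
      ModuleCat.of A (↥X ⧸ LinearMap.range ι) ∈ C →
      ∃ r : ↥X →ₗ[A] ↥B, r.comp ι = LinearMap.id := by
  intro X hX ι hι _
  obtain ⟨f', hf'⟩ := hEinj.out ι hι f
  obtain ⟨h, hh⟩ := happrox X hX f'
  have hg : Function.Bijective (h.comp ι) := by
    apply hmin
    ext b
    simpa using (congrArg (fun φ => φ (ι b)) hh).trans (hf' b)
  let e := LinearEquiv.ofBijective (h.comp ι) hg
  refine ⟨e.symm.toLinearMap.comp h, ?_⟩
  ext b
  exact e.symm_apply_apply b
end
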